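/- For every s ∈ [0,1], 2·∫₀¹∫₀¹ 1_{s<x}·(xy)^β·h(s/x) dy dx = (1−s)·h(s). Equivalently, for U, V independent uniform on [0,1], 2·E[1_{s<U}·(UV)^β·h(s/U)] = (1−s)·h(s). -/

import Mathlib

open MeasureTheory Real Set

/-- The exponent `β = (√17 - 3)/2`, the positive root of `(β+1)(β+2) = 4`. -/
noncomputable def β : ℝ := (Real.sqrt 17 - 3) / 2

/-- The scaling function `h(s) = (s(1-s))^{β/2}`. -/
noncomputable def h (s : ℝ) : ℝ := (s * (1 - s)) ^ (β / 2)

/-!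
For `s < x` the integrand factors as `y^β · (s(x-s))^{β/2}`, because
`x^β h(s/x) = (s(x-s))^{β/2}`. Integrating gives `1/(β+1)` in `y` and
`s^{β/2} (1-s)^{β/2+1} / (β/2+1)` in `x`, so the left side is `4/((β+1)(β+2)) · (1-s) h(s)`, and
`(β+1)(β+2) = 4` is exactly the defining equation of `β`.
-/

lemma beta_pos : 0 < β := by
  have : (3 : ℝ) < √17 := by
    rw [show (3 : ℝ) = √(3 ^ 2) by simp]
    exact Real.sqrt_lt_sqrt (by norm_num) (by norm_num)
  unfold β
  linarith

lemma beta_add_one_mul_beta_add_two : (β + 1) * (β + 2) = 4 := by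
  have : √17 ^ 2 = 17 := Real.sq_sqrt (by norm_num)
  unfold β
  linear_combination this / 4

lemma rpow_two_mul_mul_rpow_div_mul_one_sub_div {s x : ℝ} (hs : 0 ≤ s) (hsx : s ≤ x)
    (hx : 0 < x) (a : ℝ) :
    x ^ (2 * a) * (s / x * (1 - s / x)) ^ a = (s * (x - s)) ^ a := by
  have hsx' : 0 ≤ s * (x - s) := mul_nonneg hs (sub_nonneg.2 hsx)
  rw [rpow_mul hx.le, rpow_two, show s / x * (1 - s / x) = s * (x - s) / x ^ 2 by field_simp,
    div_rpow hsx' (by positivity), mul_div_cancel₀]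
  exact (rpow_pos_of_pos (by positivity) a).ne'

lemma integral_mul_rpow_mul_const {r : ℝ} (hr : -1 < r) {x : ℝ} (hx : 0 ≤ x) (c : ℝ) :
    ∫ y in (0 : ℝ)..1, (x * y) ^ r * c = x ^ r * c / (r + 1) := by
  calc ∫ y in (0 : ℝ)..1, (x * y) ^ r * c = ∫ y in (0 : ℝ)..1, x ^ r * c * y ^ r := by
        refine intervalIntegral.integral_congr fun y hy ↦ ?_
        rw [uIcc_of_le zero_le_one] at hy
        simp only [mul_rpow hx hy.1]
        ring
    _ = x ^ r * c / (r + 1) := by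
        rw [intervalIntegral.integral_const_mul, integral_rpow (Or.inl hr), one_rpow,
          zero_rpow (by linarith)]
        ring

lemma integral_ite_lt {a b s : ℝ} (hs : s ∈ Icc a b) (f : ℝ → ℝ) :
    ∫ x in a..b, (if s < x then f x else 0) = ∫ x in s..b, f x := by
  have : Ioi s ∩ Ioc a b = Ioc s b := by
    rw [inter_comm, Ioc_inter_Ioi, sup_eq_right.2 hs.1]
  rw [intervalIntegral.integral_of_le (hs.1.trans hs.2), intervalIntegral.integral_of_le hs.2,
    ← this, ← Measure.restrict_restrict measurableSet_Ioi,
    ← integral_indicator measurableSet_Ioi]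
  rfl

lemma integral_mul_sub_rpow {r : ℝ} (hr : -1 < r) {s b : ℝ} (hs : 0 ≤ s) (hsb : s ≤ b) :
    ∫ x in s..b, (s * (x - s)) ^ r = s ^ r * (b - s) ^ (r + 1) / (r + 1) := by
  calc ∫ x in s..b, (s * (x - s)) ^ r = s ^ r * ∫ x in s..b, (x - s) ^ r := by
        rw [← intervalIntegral.integral_const_mul]
        refine intervalIntegral.integral_congr fun x hx ↦ ?_
        rw [uIcc_of_le hsb] at hx
        exact mul_rpow hs (sub_nonneg.2 hx.1)
    _ = s ^ r * (b - s) ^ (r + 1) / (r + 1) := by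
        rw [intervalIntegral.integral_comp_sub_right (· ^ r), sub_self, integral_rpow (Or.inl hr),
          zero_rpow (by linarith)]
        ring

/-- For every `s ∈ [0,1]`:  `2 ∫₀¹∫₀¹ 1_{s<x} (xy)^β h(s/x) dy dx = (1-s) h(s)`. -/
theorem half_martingale_identity :
    ∀ s ∈ Set.Icc (0 : ℝ) 1,
      2 * (∫ x in (0:ℝ)..1, ∫ y in (0:ℝ)..1,
        (if s < x then (x * y) ^ β * h (s / x) else 0)) = (1 - s) * h s := by
  intro s hs
  have hβ := beta_pos
  have hinner : ∀ x, ∫ y in (0 : ℝ)..1, (if s < x then (x * y) ^ β * h (s / x) else 0) =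
      (if s < x then (s * (x - s)) ^ (β / 2) else 0) / (β + 1) := by
    intro x
    split_ifs with hsx
    · have hx : 0 < x := hs.1.trans_lt hsx
      rw [integral_mul_rpow_mul_const (by linarith) hx.le, h,
        ← rpow_two_mul_mul_rpow_div_mul_one_sub_div hs.1 hsx.le hx,
        mul_div_cancel₀ β two_ne_zero]
    · simp
  simp_rw [hinner]
  rw [intervalIntegral.integral_div, integral_ite_lt hs,
    integral_mul_sub_rpow (by linarith) hs.1 hs.2, h, mul_rpow hs.1 (sub_nonneg.2 hs.2),
    rpow_add' (sub_nonneg.2 hs.2) (by linarith), rpow_one]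
  have := beta_add_one_mul_beta_add_two
  field_simp
  linear_combination s ^ (β / 2) * (1 - s) ^ (β / 2) * (s - 1) * this
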